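/- Let b' ∈ GL_n(K) with Hodge point μ(b')_1 ≥ … ≥ μ(b')_n, and let N be a positive integer with N > μ(b')_1 − μ(b')_n. Then for every g ∈ GL_n(W(k)) with g ≡ 1 (mod p^N) (entrywise congruence of matrices over W(k)) one has b'⁻¹·g·b' ∈ GL_n(W(k)), and consequently μ(b·g·b') = μ(b·b') for every b ∈ GL_n(K). -/

import Mathlib

/-!
Statement 0.  Setting: `p` prime, `κ` algebraically closed of characteristic `p`,
`𝕎 = W(κ)` the Witt vectors, `K = Frac(W(κ))`.  The Hodge point `μ(b)` of
`b ∈ GL_n(K)` is the unique decreasing integer tuple with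
`b = c₁ ⬝ diag(p^{μ₁},…,p^{μₙ}) ⬝ c₂`, `c₁, c₂ ∈ GL_n(W(κ))`.

If `b' ∈ GL_n(K)` has Hodge point `μ'` and `N > μ'₁ − μ'ₙ`, then for every
`g ∈ GL_n(W(κ))` with `g ≡ 1 (mod p^N)` one has `b'⁻¹ g b' ∈ GL_n(W(κ))` and
consequently `μ(b·g·b') = μ(b·b')` for every `b ∈ GL_n(K)`.
-/

open Matrix

noncomputable section

variable (p : ℕ) [Fact p.Prime] (κ : Type) [Field κ] [IsAlgClosed κ] [CharP κ p]

local notation "𝕎" => WittVector p κ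
local notation "K" => FractionRing (WittVector p κ)

/-- `c ∈ GL_n(W(κ)) ⊆ GL_n(K)`: `c` is the image of a matrix over `W(κ)` whose
determinant is a unit of `W(κ)`. -/
def IsIntegralUnit {n : ℕ} (c : Matrix (Fin n) (Fin n) K) : Prop :=
  ∃ d : Matrix (Fin n) (Fin n) 𝕎, IsUnit d.det ∧ c = d.map (algebraMap 𝕎 K)

/-- `μ` is the Hodge point of `b`: `μ` is decreasing and
`b = c₁ ⬝ diag(p^{μ i}) ⬝ c₂` with `c₁, c₂ ∈ GL_n(W(κ))`. -/
def IsHodgePoint {n : ℕ} (b : Matrix (Fin n) (Fin n) K) (μ : Fin n → ℤ) : Prop :=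
  Antitone μ ∧ ∃ c₁ c₂ : Matrix (Fin n) (Fin n) K, IsIntegralUnit p κ c₁ ∧ IsIntegralUnit p κ c₂ ∧
    b = c₁ * Matrix.diagonal (fun i => (p : K) ^ (μ i)) * c₂

set_option linter.unusedSectionVars false

/-!
Write `b' = c₁ D c₂` with `c₁, c₂ ∈ GL_n(W(κ))` and `D = diag(p^{μ'ᵢ})`. Conjugating by `c₁`
keeps `g = 1 + p^N W` of the same shape, and conjugating `1 + p^N W` by `D` multiplies the
`(i, j)` entry of `p^N W` by `p^{μ'ⱼ - μ'ᵢ}`; since `μ'ᵢ - μ'ⱼ ≤ μ'₁ - μ'ₙ < N` the result is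
still integral, and it has the same determinant as `g`. So `b'⁻¹ g b'` lies in `GL_n(W(κ))`,
and `b g b' = (b b')(b'⁻¹ g b')` has the same Hodge point as `b b'`.
-/

section DiagonalConjugation

variable {ι R F : Type*} [Fintype ι] [DecidableEq ι] [CommRing R] [Field F] [Algebra R F]

theorem Matrix.exists_eq_one_add_smul_of_dvd {x : R} {g : Matrix ι ι R}
    (h : ∀ i j, x ∣ g i j - (1 : Matrix ι ι R) i j) : ∃ W : Matrix ι ι R, g = 1 + x • W := by
  choose w hw using h
  refine ⟨of w, ?_⟩
  ext i j
  rw [add_apply, smul_apply, of_apply, smul_eq_mul, ← hw]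
  abel

theorem Matrix.map_inv_of_isUnit_det {S : Type*} [CommRing S] (f : R →+* S) {d : Matrix ι ι R}
    (hd : IsUnit d.det) : (d.map f)⁻¹ = d⁻¹.map f := by
  apply inv_eq_right_inv
  rw [← Matrix.map_mul, mul_nonsing_inv _ hd, Matrix.map_one _ (map_zero f) (map_one f)]

theorem Matrix.isUnit_det_diagonal_zpow {y : F} (hy : y ≠ 0) (μ : ι → ℤ) :
    IsUnit (diagonal fun i => y ^ μ i).det := by
  rw [det_diagonal, isUnit_iff_ne_zero]
  exact Finset.prod_ne_zero_iff.mpr fun i _ => zpow_ne_zero _ hy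

theorem Matrix.inv_diagonal_zpow {y : F} (hy : y ≠ 0) (μ : ι → ℤ) :
    (diagonal fun i => y ^ μ i)⁻¹ = diagonal fun i => y ^ (-μ i) := by
  apply inv_eq_left_inv
  rw [diagonal_mul_diagonal, ← diagonal_one]
  congr 1
  funext i
  rw [_root_.zpow_neg, inv_mul_cancel₀ (zpow_ne_zero _ hy)]

theorem Matrix.diagonal_zpow_conj_map_pow_smul {x : R} (hx : algebraMap R F x ≠ 0) {μ : ι → ℤ}
    {N : ℕ} (hμ : ∀ i j, μ i - μ j ≤ N) (W : Matrix ι ι R) :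
    (diagonal fun i => algebraMap R F x ^ μ i)⁻¹ * (x ^ N • W).map (algebraMap R F) *
        diagonal (fun i => algebraMap R F x ^ μ i) =
      (of fun i j => x ^ (N + μ j - μ i).toNat * W i j).map (algebraMap R F) := by
  ext i j
  set y := algebraMap R F x
  have hpow : y ^ (N + μ j - μ i).toNat = y ^ (-μ i) * y ^ N * y ^ μ j := by
    rw [← zpow_natCast, Int.toNat_of_nonneg (by linarith [hμ i j]), ← zpow_natCast,
      ← zpow_add₀ hx, ← zpow_add₀ hx]
    ring_nf
  rw [inv_diagonal_zpow hx, mul_diagonal, diagonal_mul]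
  simp only [map_apply, smul_apply, of_apply, smul_eq_mul, map_mul, map_pow, hpow, y]
  ring

theorem Matrix.diagonal_zpow_conj_map_one_add_pow_smul {x : R} (hx : algebraMap R F x ≠ 0)
    {μ : ι → ℤ} {N : ℕ} (hμ : ∀ i j, μ i - μ j ≤ N) (W : Matrix ι ι R) :
    (diagonal fun i => algebraMap R F x ^ μ i)⁻¹ * (1 + x ^ N • W).map (algebraMap R F) *
        diagonal (fun i => algebraMap R F x ^ μ i) =
      (1 + of fun i j => x ^ (N + μ j - μ i).toNat * W i j).map (algebraMap R F) := by
  rw [Matrix.map_add _ (map_add _), Matrix.map_add _ (map_add _),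
    Matrix.map_one _ (map_zero _) (map_one _), mul_add, add_mul, mul_one,
    nonsing_inv_mul _ (isUnit_det_diagonal_zpow hx μ), diagonal_zpow_conj_map_pow_smul hx hμ]

theorem Matrix.det_eq_of_map_eq_conj [IsFractionRing R F] {e g : Matrix ι ι R}
    {P : Matrix ι ι F} (hP : IsUnit P.det)
    (h : e.map (algebraMap R F) = P⁻¹ * g.map (algebraMap R F) * P) : e.det = g.det := by
  apply IsFractionRing.injective R F
  rw [RingHom.map_det, RingHom.map_det, RingHom.mapMatrix_apply, RingHom.mapMatrix_apply, h,
    det_conj' ((isUnit_iff_isUnit_det P).mpr hP)]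

end DiagonalConjugation

theorem IsIntegralUnit.isUnit_det {n : ℕ} {c : Matrix (Fin n) (Fin n) K}
    (h : IsIntegralUnit p κ c) : IsUnit c.det := by
  obtain ⟨d, hd, rfl⟩ := h
  simpa only [RingHom.map_det, RingHom.mapMatrix_apply] using hd.map (algebraMap 𝕎 K)

theorem IsIntegralUnit.mul {n : ℕ} {c c' : Matrix (Fin n) (Fin n) K}
    (h : IsIntegralUnit p κ c) (h' : IsIntegralUnit p κ c') : IsIntegralUnit p κ (c * c') := by
  obtain ⟨d, hd, rfl⟩ := h
  obtain ⟨d', hd', rfl⟩ := h'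
  exact ⟨d * d', by rw [det_mul]; exact hd.mul hd', Matrix.map_mul.symm⟩

theorem IsIntegralUnit.inv {n : ℕ} {c : Matrix (Fin n) (Fin n) K}
    (h : IsIntegralUnit p κ c) : IsIntegralUnit p κ c⁻¹ := by
  obtain ⟨d, hd, rfl⟩ := h
  exact ⟨d⁻¹, isUnit_nonsing_inv_det _ hd, map_inv_of_isUnit_det (algebraMap 𝕎 K) hd⟩

theorem IsHodgePoint.isUnit_det {n : ℕ} {b : Matrix (Fin n) (Fin n) K} {μ : Fin n → ℤ}
    (h : IsHodgePoint p κ b μ) : IsUnit b.det := by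
  obtain ⟨-, c₁, c₂, h₁, h₂, rfl⟩ := h
  simp only [det_mul]
  exact ((h₁.isUnit_det p κ).mul
    (isUnit_det_diagonal_zpow (WittVector.FractionRing.p_nonzero p κ) μ)).mul (h₂.isUnit_det p κ)

theorem isHodgePoint_mul_right_iff {n : ℕ} {x u : Matrix (Fin n) (Fin n) K}
    (hu : IsIntegralUnit p κ u) (μ : Fin n → ℤ) :
    IsHodgePoint p κ (x * u) μ ↔ IsHodgePoint p κ x μ := by
  have mul_right : ∀ {y v}, IsIntegralUnit p κ v → IsHodgePoint p κ y μ →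
      IsHodgePoint p κ (y * v) μ := by
    rintro y v hv ⟨hμ, c₁, c₂, h₁, h₂, rfl⟩
    exact ⟨hμ, c₁, c₂ * v, h₁, h₂.mul p κ hv, by rw [mul_assoc]⟩
  refine ⟨fun h => ?_, mul_right hu⟩
  simpa only [mul_nonsing_inv_cancel_right _ _ (hu.isUnit_det p κ)] using mul_right (hu.inv p κ) h

theorem isIntegralUnit_inv_mul_map_mul_of_isHodgePoint {n : ℕ} {b' : Matrix (Fin n) (Fin n) K}
    {μ' : Fin n → ℤ} (hμ' : IsHodgePoint p κ b' μ') {N : ℕ} (hN : ∀ i j, μ' i - μ' j ≤ N)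
    {g : Matrix (Fin n) (Fin n) 𝕎} (hg : IsUnit g.det)
    (hcong : ∀ i j, (p : 𝕎) ^ N ∣ g i j - (1 : Matrix (Fin n) (Fin n) 𝕎) i j) :
    IsIntegralUnit p κ (b'⁻¹ * g.map (algebraMap 𝕎 K) * b') := by
  obtain ⟨-, c₁, c₂, ⟨d₁, hd₁, rfl⟩, hc₂, rfl⟩ := hμ'
  obtain ⟨W, hW⟩ := exists_eq_one_add_smul_of_dvd hcong
  have hp : (p : K) ≠ 0 := WittVector.FractionRing.p_nonzero p κ
  set D := diagonal fun i => (p : K) ^ μ' i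
  set e : Matrix (Fin n) (Fin n) 𝕎 :=
    1 + of fun i j => (p : 𝕎) ^ (N + μ' j - μ' i).toNat * (d₁⁻¹ * W * d₁) i j
  have hconj : d₁⁻¹ * g * d₁ = 1 + (p : 𝕎) ^ N • (d₁⁻¹ * W * d₁) := by
    rw [hW, mul_add, add_mul, mul_one, nonsing_inv_mul _ hd₁, Matrix.mul_smul, Matrix.smul_mul]
  have hP : IsUnit (d₁.map (algebraMap 𝕎 K) * D).det := by
    rw [det_mul]
    exact (IsIntegralUnit.isUnit_det p κ ⟨d₁, hd₁, rfl⟩).mul (isUnit_det_diagonal_zpow hp _)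
  have he : (d₁.map (algebraMap 𝕎 K) * D)⁻¹ * g.map (algebraMap 𝕎 K) *
      (d₁.map (algebraMap 𝕎 K) * D) = e.map (algebraMap 𝕎 K) := by
    have key := diagonal_zpow_conj_map_one_add_pow_smul (F := K) (x := (p : 𝕎))
      (by rwa [map_natCast]) hN (d₁⁻¹ * W * d₁)
    rw [map_natCast, ← hconj, Matrix.map_mul, Matrix.map_mul,
      ← map_inv_of_isUnit_det _ hd₁] at key
    rw [← key, Matrix.mul_inv_rev]
    simp only [mul_assoc, D]
  have he_unit : IsIntegralUnit p κ (e.map (algebraMap 𝕎 K)) :=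
    ⟨e, det_eq_of_map_eq_conj hP he.symm ▸ hg, rfl⟩
  have hfactor : (d₁.map (algebraMap 𝕎 K) * D * c₂)⁻¹ * g.map (algebraMap 𝕎 K) *
      (d₁.map (algebraMap 𝕎 K) * D * c₂) = c₂⁻¹ * e.map (algebraMap 𝕎 K) * c₂ := by
    rw [← he, Matrix.mul_inv_rev (_ * D)]
    simp only [mul_assoc]
  exact hfactor ▸ ((hc₂.inv p κ).mul p κ he_unit).mul p κ hc₂

theorem statement_0 (n : ℕ) (hn : 0 < n)
    (b' : Matrix (Fin n) (Fin n) K)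
    (μ' : Fin n → ℤ) (hμ' : IsHodgePoint p κ b' μ')
    (N : ℕ)
    (hN : (N : ℤ) > μ' ⟨0, hn⟩ - μ' ⟨n - 1, by omega⟩)
    (g : Matrix (Fin n) (Fin n) 𝕎) (hg : IsUnit g.det)
    (hcong : ∀ i j, (p : 𝕎) ^ N ∣ (g i j - (1 : Matrix (Fin n) (Fin n) 𝕎) i j)) :
    IsIntegralUnit p κ (b'⁻¹ * g.map (algebraMap 𝕎 K) * b') ∧
    ∀ b : Matrix (Fin n) (Fin n) K, IsUnit b.det →
      ∀ μ : Fin n → ℤ,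
        IsHodgePoint p κ (b * g.map (algebraMap 𝕎 K) * b') μ ↔ IsHodgePoint p κ (b * b') μ := by
  have hspread : ∀ i j, μ' i - μ' j ≤ N := fun i j => by
    have hi : μ' i ≤ μ' ⟨0, hn⟩ := hμ'.1 (Fin.le_def.mpr (Nat.zero_le _))
    have hj : μ' ⟨n - 1, by omega⟩ ≤ μ' j := hμ'.1 (Fin.le_def.mpr (Nat.le_sub_one_of_lt j.isLt))
    omega
  have hu := isIntegralUnit_inv_mul_map_mul_of_isHodgePoint p κ hμ' hspread hg hcong
  refine ⟨hu, fun b _ μ => ?_⟩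
  have hfactor :
      b * g.map (algebraMap 𝕎 K) * b' = b * b' * (b'⁻¹ * g.map (algebraMap 𝕎 K) * b') := by
    simp only [mul_assoc, mul_nonsing_inv_cancel_left _ _ (hμ'.isUnit_det p κ)]
  rw [hfactor, isHodgePoint_mul_right_iff p κ hu]
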